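/- Let v be an eigenvector of gᵀg corresponding to its minimum eigenvalue, written in blocks v_1,...,v_N, and suppose the block with largest norm is the last block v_N. Then λ_min(gᵀg) ≥ 1 − σ_max(g_N). -/

import Mathlib

open Matrix

/-- Block diagonal matrix with `N` diagonal blocks of size `n`. -/
def blkDiag {N n : ℕ} (q : Fin N → Matrix (Fin n) (Fin n) ℝ) :
    Matrix (Fin N × Fin n) (Fin N × Fin n) ℝ :=
  fun p r => if p.1 = r.1 then q p.1 p.2 r.2 else 0

/-- Block lower bidiagonal matrix with identity diagonal blocks and subdiagonal
blocks; the block in position `(i, i-1)` (0-based) is `g (i+1)` (1-based paper index),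
i.e. paper's `g_k` sits in (1-based) position `(k, k-1)` for `k = 2,…,N`. -/
def lowerBidiag (N n : ℕ) (g : ℕ → Matrix (Fin n) (Fin n) ℝ) :
    Matrix (Fin N × Fin n) (Fin N × Fin n) ℝ :=
  fun p r =>
    if p.1 = r.1 then (if p.2 = r.2 then 1 else 0)
    else if (r.1 : ℕ) + 1 = (p.1 : ℕ) then g ((p.1 : ℕ) + 1) p.2 r.2
    else 0

/-- Minimum eigenvalue of a Hermitian real matrix. -/
noncomputable def lamMin {ι : Type*} [Fintype ι] [DecidableEq ι]
    (A : Matrix ι ι ℝ) (hA : A.IsHermitian) : ℝ := ⨅ i, hA.eigenvalues i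

/-- Maximum eigenvalue of a Hermitian real matrix. -/
noncomputable def lamMax {ι : Type*} [Fintype ι] [DecidableEq ι]
    (A : Matrix ι ι ℝ) (hA : A.IsHermitian) : ℝ := ⨆ i, hA.eigenvalues i

/-- Minimum singular value: square root of the minimum eigenvalue of `Aᴴ * A`. -/
noncomputable def sigMin {ι : Type*} [Fintype ι] [DecidableEq ι]
    (A : Matrix ι ι ℝ) : ℝ :=
  Real.sqrt (lamMin (Aᴴ * A) (isHermitian_conjTranspose_mul_self A))

/-- Maximum singular value: square root of the maximum eigenvalue of `Aᴴ * A`. -/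
noncomputable def sigMax {ι : Type*} [Fintype ι] [DecidableEq ι]
    (A : Matrix ι ι ℝ) : ℝ :=
  Real.sqrt (lamMax (Aᴴ * A) (isHermitian_conjTranspose_mul_self A))

/-! The last block column of `g` is that of the identity, so the last block row of
`gᵀg v = λ v` reads `λ v_N = v_N + g_N v_{N-1}`. Hence
`|λ - 1| ‖v_N‖ = ‖g_N v_{N-1}‖ ≤ σ_max(g_N) ‖v_{N-1}‖ ≤ σ_max(g_N) ‖v_N‖`,
and `‖v_N‖ > 0` since `v_N` is the largest block of a nonzero vector. -/

section Spectral

variable {m : Type*} [Fintype m] [DecidableEq m]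

lemma dotProduct_mulVec_le_lamMax (A : Matrix m m ℝ) (hA : A.IsHermitian) (x : m → ℝ) :
    x ⬝ᵥ (A *ᵥ x) ≤ lamMax A hA * (x ⬝ᵥ x) := by
  set U : Matrix m m ℝ := ↑hA.eigenvectorUnitary
  set y := star U *ᵥ x
  have hUy : U *ᵥ y = x := by
    rw [mulVec_mulVec, show U * star U = 1 from Unitary.coe_mul_star_self _, one_mulVec]
  have hstar : star U = Uᵀ := by ext; simp
  have hdiag : star U * A * U = diagonal hA.eigenvalues := by
    simpa [Unitary.conjStarAlgAut_star_apply] using hA.conjStarAlgAut_star_eigenvectorUnitary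
  have hquad : x ⬝ᵥ (A *ᵥ x) = ∑ i, hA.eigenvalues i * y i ^ 2 := by
    rw [← hUy, dotProduct_comm, dotProduct_mulVec, ← mulVec_transpose, ← hstar, dotProduct_comm,
      mulVec_mulVec, mulVec_mulVec, hdiag]
    simp only [dotProduct, mulVec_diagonal]
    exact Finset.sum_congr rfl fun i _ => by ring
  have hnorm : x ⬝ᵥ x = ∑ i, y i ^ 2 := by
    rw [← hUy, dotProduct_comm, dotProduct_mulVec, ← mulVec_transpose, ← hstar, dotProduct_comm,
      mulVec_mulVec, show star U * U = 1 from Unitary.coe_star_mul_self _, one_mulVec]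
    simp only [dotProduct, sq]
  rw [hquad, hnorm, Finset.mul_sum]
  gcongr with i
  exact le_ciSup (Set.finite_range _).bddAbove i

lemma sigMax_sq (A : Matrix m m ℝ) :
    sigMax A ^ 2 = lamMax (Aᴴ * A) (isHermitian_conjTranspose_mul_self A) :=
  Real.sq_sqrt (Real.iSup_nonneg (eigenvalues_conjTranspose_mul_self_nonneg A))

lemma sum_sq_mulVec_le_sigMax_sq (A : Matrix m m ℝ) (w : m → ℝ) :
    ∑ i, (A *ᵥ w) i ^ 2 ≤ sigMax A ^ 2 * ∑ i, w i ^ 2 := by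
  have hquad : ∑ i, (A *ᵥ w) i ^ 2 = w ⬝ᵥ ((Aᴴ * A) *ᵥ w) := by
    rw [← mulVec_mulVec, conjTranspose_eq_transpose_of_trivial, dotProduct_transpose_mulVec]
    simp only [dotProduct, sq]
  have hnorm : ∑ i, w i ^ 2 = w ⬝ᵥ w := by simp only [dotProduct, sq]
  rw [hquad, hnorm, sigMax_sq]
  exact dotProduct_mulVec_le_lamMax _ _ w

end Spectral

section Blocks

variable {N n : ℕ}

/-- The block `v_{k-1}` preceding block `k`, with the convention `v_{-1} = 0` (0-based blocks). -/
def prevBlock (v : Fin N × Fin n → ℝ) (k : Fin N) : Fin n → ℝ :=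
  if h : 0 < (k : ℕ) then fun b => v (⟨k - 1, by omega⟩, b) else 0

lemma sum_sq_prevBlock_le (v : Fin N × Fin n → ℝ) (k : Fin N) {B : ℝ}
    (hB : ∀ j, ∑ b, v (j, b) ^ 2 ≤ B) (hB₀ : 0 ≤ B) :
    ∑ b, prevBlock v k b ^ 2 ≤ B := by
  unfold prevBlock
  split_ifs
  · exact hB _
  · simpa using hB₀

lemma lowerBidiag_mulVec_apply (g : ℕ → Matrix (Fin n) (Fin n) ℝ)
    (v : Fin N × Fin n → ℝ) (k : Fin N) (a : Fin n) :
    (lowerBidiag N n g *ᵥ v) (k, a) = v (k, a) + (g (k + 1) *ᵥ prevBlock v k) a := by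
  have hblock : ∀ j : Fin N, ∑ b, lowerBidiag N n g (k, a) (j, b) * v (j, b) =
      (if j = k then v (k, a) else 0) +
        (if (j : ℕ) + 1 = k then (g (k + 1) *ᵥ fun b => v (j, b)) a else 0) := by
    intro j
    by_cases hjk : j = k
    · subst hjk; simp [lowerBidiag]
    · simp [lowerBidiag, Ne.symm hjk, hjk, mulVec, dotProduct]
  rw [mulVec, dotProduct, Fintype.sum_prod_type, Finset.sum_congr rfl fun j _ => hblock j,
    Finset.sum_add_distrib, Finset.sum_ite_eq', if_pos (Finset.mem_univ k)]
  congr 1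
  by_cases hk : 0 < (k : ℕ)
  · have hprev : ∀ j : Fin N, (j : ℕ) + 1 = k ↔ j = ⟨k - 1, by omega⟩ := fun j => by
      simp only [Fin.ext_iff]; omega
    simp_rw [hprev, Finset.sum_ite_eq', Finset.mem_univ, if_true]
    rw [prevBlock, dif_pos hk]
  · have hprev : ∀ j : Fin N, (j : ℕ) + 1 ≠ k := fun j => by omega
    simp [hprev, prevBlock, hk]

lemma conjTranspose_lowerBidiag_mulVec_apply_last (g : ℕ → Matrix (Fin n) (Fin n) ℝ)
    (u : Fin N × Fin n → ℝ) (k : Fin N) (hk : (k : ℕ) + 1 = N) (a : Fin n) :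
    ((lowerBidiag N n g)ᴴ *ᵥ u) (k, a) = u (k, a) := by
  have hcol : ∀ p, lowerBidiag N n g p (k, a) = if p = (k, a) then 1 else 0 := by
    rintro ⟨j, b⟩
    have hj : (k : ℕ) + 1 ≠ j := by omega
    by_cases hjk : j = k
    · subst hjk; simp [lowerBidiag, eq_comm]
    · simp [lowerBidiag, hjk, hj]
  simp [mulVec, dotProduct, hcol]

end Blocks

lemma sum_sq_pos_of_ne_zero_of_forall_le {ι κ : Type*} [Fintype κ] {v : ι × κ → ℝ}
    (hv : v ≠ 0) (l : ι) (hl : ∀ k, ∑ a, v (k, a) ^ 2 ≤ ∑ a, v (l, a) ^ 2) :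
    0 < ∑ a, v (l, a) ^ 2 := by
  obtain ⟨⟨k, c⟩, hkc⟩ := Function.ne_iff.mp hv
  have hc : v (k, c) ≠ 0 := hkc
  calc 0 < v (k, c) ^ 2 := by positivity
    _ ≤ ∑ a, v (k, a) ^ 2 :=
      Finset.single_le_sum (f := fun a => v (k, a) ^ 2) (fun a _ => sq_nonneg _)
        (Finset.mem_univ c)
    _ ≤ ∑ a, v (l, a) ^ 2 := hl k
theorem stmt3_general (N n : ℕ)
    (g : ℕ → Matrix (Fin n) (Fin n) ℝ)
    (G : Matrix (Fin N × Fin n) (Fin N × Fin n) ℝ) (hGdef : G = lowerBidiag N n g)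
    (lastIdx : Fin N) (hlast : (lastIdx : ℕ) = N - 1)
    (v : Fin N × Fin n → ℝ) (hv : v ≠ 0)
    (heig : (Gᴴ * G) *ᵥ v =
      lamMin (Gᴴ * G) (isHermitian_conjTranspose_mul_self G) • v)
    (hbig : ∀ k : Fin N, ∑ a, v (k, a) ^ 2 ≤ ∑ a, v (lastIdx, a) ^ 2) :
    1 - sigMax (g N) ≤ lamMin (Gᴴ * G) (isHermitian_conjTranspose_mul_self G) := by
  subst hGdef
  set lam := lamMin _ (isHermitian_conjTranspose_mul_self (lowerBidiag N n g))
  set S := ∑ a, v (lastIdx, a) ^ 2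
  have hN : (lastIdx : ℕ) + 1 = N := by omega
  have hS : 0 < S := sum_sq_pos_of_ne_zero_of_forall_le hv lastIdx hbig
  have hrow : ∀ a, (g N *ᵥ prevBlock v lastIdx) a = (lam - 1) * v (lastIdx, a) := by
    intro a
    have h := congrFun heig (lastIdx, a)
    rw [← mulVec_mulVec, conjTranspose_lowerBidiag_mulVec_apply_last g _ lastIdx hN,
      lowerBidiag_mulVec_apply, hN, Pi.smul_apply, smul_eq_mul] at h
    linarith
  have hsq : (lam - 1) ^ 2 * S ≤ sigMax (g N) ^ 2 * S :=
    calc (lam - 1) ^ 2 * S = ∑ a, (g N *ᵥ prevBlock v lastIdx) a ^ 2 := by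
          simp only [S, hrow, Finset.mul_sum, mul_pow]
      _ ≤ sigMax (g N) ^ 2 * ∑ b, prevBlock v lastIdx b ^ 2 := sum_sq_mulVec_le_sigMax_sq _ _
      _ ≤ sigMax (g N) ^ 2 * S := by gcongr; exact sum_sq_prevBlock_le v lastIdx hbig hS.le
  have hdev := abs_le_of_sq_le_sq' (le_of_mul_le_mul_right hsq hS) (Real.sqrt_nonneg _)
  linarith [hdev.1]

/-- If `v` is an eigenvector of `gᵀg` for the minimum eigenvalue and the
block of `v` with largest (Euclidean) norm is the last block `v_N`, then
`λ_min(gᵀg) ≥ 1 − σ_max(g_N)`.  (Blocks are indexed by `Fin N`; the subdiagonal block in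
row `i` of `g` is `g (i+1)` in 1-based paper indexing, so the last one is `g N`.) -/
theorem stmt3 (N n : ℕ) [NeZero N] [NeZero n]
    (g : ℕ → Matrix (Fin n) (Fin n) ℝ)
    (G : Matrix (Fin N × Fin n) (Fin N × Fin n) ℝ) (hGdef : G = lowerBidiag N n g)
    (lastIdx : Fin N) (hlast : (lastIdx : ℕ) = N - 1)
    (v : Fin N × Fin n → ℝ) (hv : v ≠ 0)
    (heig : (Gᴴ * G) *ᵥ v =
      lamMin (Gᴴ * G) (isHermitian_conjTranspose_mul_self G) • v)
    (hbig : ∀ k : Fin N, ∑ a, v (k, a) ^ 2 ≤ ∑ a, v (lastIdx, a) ^ 2) :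
    1 - sigMax (g N) ≤ lamMin (Gᴴ * G) (isHermitian_conjTranspose_mul_self G) :=
  stmt3_general N n g G hGdef lastIdx hlast v hv heig hbig
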